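/- arXiv:2412.16043 — 5 statements merged into one kernel-verified Lean document; each statement's English description precedes it below -/
import Mathlib

section
/- A finite commutative ring R with identity is a chain ring (its ideals are linearly ordered by inclusion) if and only if R is a local ring whose maximal ideal is principal. -/
/-!
Ideals form a chain exactly when divisibility is total, i.e. when `R` is a (pre-)valuation ring.
Such a ring is local, and any two generators `x, y` span the ideal generated by whichever divides
the other, so every finitely generated ideal, in particular the maximal one, is principal.
Conversely, if the maximal ideal of a finite local ring is `(m)`, then `m` is nilpotent and every
element is a unit multiple of a power of `m`; comparing exponents makes divisibility total.
-/

open IsLocalRing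

theorem PreValuationRing.isBezout {R : Type*} [CommRing R] [PreValuationRing R] : IsBezout R := by
  refine IsBezout.iff_span_pair_isPrincipal.mpr fun x y => ?_
  rw [Ideal.span_insert]
  rcases ValuationRing.dvd_total x y with h | h
  · rw [sup_eq_left.mpr (Ideal.span_singleton_le_span_singleton.mpr h)]
    exact ⟨⟨x, rfl⟩⟩
  · rw [sup_eq_right.mpr (Ideal.span_singleton_le_span_singleton.mpr h)]
    exact ⟨⟨y, rfl⟩⟩

theorem IsLocalRing.exists_associated_pow_of_maximalIdeal_eq_span {R : Type*} [CommRing R]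
    [IsLocalRing R] {m : R} (hM : maximalIdeal R = Ideal.span {m}) (hm : IsNilpotent m) (x : R) :
    ∃ k, Associated (m ^ k) x := by
  obtain ⟨n, hn⟩ := hm
  -- split factors `m` off `x` until the power of `m` reaches `m ^ n = 0`; `j` bounds the steps left
  suffices ∀ j i, n ≤ i + j → m ^ i ∣ x → ∃ k, Associated (m ^ k) x from
    this n 0 (by omega) (by simp)
  intro j
  induction j with
  | zero =>
    rintro i hi ⟨c, rfl⟩
    refine ⟨i, ?_⟩
    rw [pow_eq_zero_of_le (by omega) hn, zero_mul]
  | succ j ih =>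
    rintro i hi ⟨c, rfl⟩
    by_cases hc : IsUnit c
    · exact ⟨i, associated_mul_unit_right _ _ hc⟩
    · obtain ⟨d, rfl⟩ : m ∣ c := by
        rw [← Ideal.mem_span_singleton, ← hM]
        exact (mem_maximalIdeal c).mpr hc
      exact ih (i + 1) (by omega) ⟨d, by ring⟩

theorem IsLocalRing.preValuationRing_of_isPrincipal_maximalIdeal {R : Type*} [CommRing R]
    [IsLocalRing R] [Ring.KrullDimLE 0 R] (h : (maximalIdeal R).IsPrincipal) :
    PreValuationRing R := by
  obtain ⟨m, hm⟩ := h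
  have hnil : IsNilpotent m := Ring.KrullDimLE.isNilpotent_iff_mem_maximalIdeal.mpr
    (hm ▸ Submodule.mem_span_singleton_self m)
  refine PreValuationRing.iff_dvd_total.mpr ⟨fun a b => ?_⟩
  obtain ⟨k, hk⟩ := exists_associated_pow_of_maximalIdeal_eq_span hm hnil a
  obtain ⟨l, hl⟩ := exists_associated_pow_of_maximalIdeal_eq_span hm hnil b
  rcases le_total k l with h | h
  · exact .inl (hk.symm.dvd.trans ((pow_dvd_pow m h).trans hl.dvd))
  · exact .inr (hl.symm.dvd.trans ((pow_dvd_pow m h).trans hk.dvd))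

/-- a finite commutative ring `R` with `1 ≠ 0` is a chain ring (its ideals are
linearly ordered by inclusion) iff `R` is a local ring (it has a unique maximal ideal) whose
maximal ideal is principal. -/
theorem stmt5 {R : Type*} [CommRing R] [Fintype R] [Nontrivial R] :
    (∀ I J : Ideal R, I ≤ J ∨ J ≤ I) ↔
      ∃ M : Ideal R, M.IsMaximal ∧ (∀ I : Ideal R, I.IsMaximal → I = M) ∧
        Submodule.IsPrincipal M := by
  have chain_iff : (∀ I J : Ideal R, I ≤ J ∨ J ≤ I) ↔ PreValuationRing R :=
    (PreValuationRing.iff_ideal_total.trans ⟨fun h => h.total, fun h => ⟨h⟩⟩).symm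
  rw [chain_iff]
  constructor
  · intro _
    have := PreValuationRing.isBezout (R := R)
    exact ⟨maximalIdeal R, inferInstance, fun _ => eq_maximalIdeal,
      IsBezout.isPrincipal_of_FG _ (IsNoetherian.noetherian _)⟩
  · rintro ⟨M, hM, hunique, hprincipal⟩
    have := IsLocalRing.of_unique_max_ideal ⟨M, hM, hunique⟩
    exact preValuationRing_of_isPrincipal_maximalIdeal (eq_maximalIdeal hM ▸ hprincipal)
end

section
/- Let S = F_{p^m}[v]/⟨v²⟩ and let α₁ + α₃v be a unit of S that is not a square, with α₀^{p^s} = α₁. Then S[x]/⟨x^{2p^s} − (α₁ + α₃v)⟩ is a chain ring whose ideals are exactly ⟨(x² − α₀)^ℓ⟩ for 0 ≤ ℓ ≤ 2p^s, and the ideal ⟨(x² − α₀)^ℓ⟩ has exactly p^{2m(2p^s − ℓ)} elements. -/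
set_option synthInstance.maxHeartbeats 1000000
set_option maxHeartbeats 1000000

open TrivSqZeroExt Polynomial

set_option linter.unusedSectionVars false
set_option linter.unusedVariables false

section Chain
variable {R : Type*} [CommRing R] [Nontrivial R] {t : R} {e : ℕ}

/-- Structure theorem for elements. -/
theorem chain_elt (he : 0 < e) (h1 : t ^ e = 0)
    (h3 : ∀ r : R, ¬ IsUnit r → r ∈ Ideal.span {t}) (r : R) (hr : r ≠ 0) :
    ∃ ℓ < e, ∃ u : R, IsUnit u ∧ r = u * t ^ ℓ := by
  classical
  set P : ℕ → Prop := fun ℓ => ∃ a : R, r = a * t ^ ℓ with hP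
  have hP0 : P 0 := ⟨r, by simp⟩
  have hPe : ¬ P e := by
    rintro ⟨a, ha⟩; exact hr (by rw [ha, h1, mul_zero])
  set ℓ := Nat.findGreatest P e with hℓ
  have hPl : P ℓ := Nat.findGreatest_spec (Nat.zero_le e) hP0
  have hle : ℓ ≤ e := Nat.findGreatest_le e
  have hlt : ℓ < e := lt_of_le_of_ne hle (fun h => hPe (h ▸ hPl))
  obtain ⟨a, ha⟩ := hPl
  refine ⟨ℓ, hlt, a, ?_, ha⟩
  by_contra hu
  obtain ⟨b, hb⟩ := Ideal.mem_span_singleton.1 (h3 a hu)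
  have : P (ℓ + 1) := ⟨b, by rw [ha, hb, pow_succ]; ring⟩
  exact Nat.findGreatest_is_greatest (Nat.lt_succ_self ℓ) (Nat.succ_le_of_lt hlt) this

theorem chain_ideal (he : 0 < e) (h1 : t ^ e = 0)
    (h3 : ∀ r : R, ¬ IsUnit r → r ∈ Ideal.span {t}) (I : Ideal R) :
    ∃ ℓ ≤ e, I = Ideal.span {t ^ ℓ} := by
  classical
  have hQe : t ^ e ∈ I := h1 ▸ I.zero_mem
  set Q : ℕ → Prop := fun ℓ => t ^ ℓ ∈ I with hQ
  have hex : ∃ ℓ, Q ℓ := ⟨e, hQe⟩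
  set ℓ₀ := Nat.find hex with hℓ₀
  have hQl : Q ℓ₀ := Nat.find_spec hex
  refine ⟨min ℓ₀ e, min_le_right _ _, ?_⟩
  have hmin : t ^ (min ℓ₀ e) ∈ I := by
    rcases le_total ℓ₀ e with h | h
    · rwa [min_eq_left h]
    · rwa [min_eq_right h]
  apply le_antisymm
  · intro r hr
    rcases eq_or_ne r 0 with rfl | hr0
    · exact Ideal.zero_mem _
    obtain ⟨k, hk, u, hu, huk⟩ := chain_elt he h1 h3 r hr0
    have htk : t ^ k ∈ I := by
      obtain ⟨w, hw⟩ := hu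
      have : (↑w⁻¹ : R) * r = t ^ k := by
        rw [huk, ← hw, ← mul_assoc, Units.inv_mul, one_mul]
      exact this ▸ I.mul_mem_left _ hr
    have hk0 : ℓ₀ ≤ k := Nat.find_le htk
    have : min ℓ₀ e ≤ k := le_trans (min_le_left _ _) hk0
    rw [Ideal.mem_span_singleton, huk]
    exact Dvd.dvd.mul_left (pow_dvd_pow t this) u
  · rw [Ideal.span_le, Set.singleton_subset_iff]
    exact hmin

theorem chain_card [Finite R] (he : 0 < e) (h1 : t ^ e = 0) (h2 : t ^ (e-1) ≠ 0)
    (h3 : ∀ r : R, ¬ IsUnit r → r ∈ Ideal.span {t}) :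
    ∀ ℓ ≤ e, Nat.card (Ideal.span {t ^ ℓ}) =
      (Nat.card (R ⧸ Ideal.span {t})) ^ (e - ℓ) := by
  classical
  set q := Nat.card (R ⧸ Ideal.span {t}) with hq
  -- kernel computation
  have key : ∀ ℓ < e, ∀ r : R, r * t ^ ℓ ∈ Ideal.span {t ^ (ℓ+1)} ↔ r ∈ Ideal.span {t} := by
    intro ℓ hℓ r
    constructor
    · intro hmem
      obtain ⟨b, hb⟩ := Ideal.mem_span_singleton.1 hmem
      by_cases hu : IsUnit r
      · exfalso
        obtain ⟨w, rfl⟩ := hu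
        have hw : t ^ ℓ = (↑w⁻¹ : R) * (t ^ (ℓ+1) * b) := by
          rw [← hb, ← mul_assoc, Units.inv_mul, one_mul]
        have hsplit : t ^ (e-1) = t ^ ℓ * t ^ (e-1-ℓ) := by
          rw [← pow_add, Nat.add_sub_cancel' (Nat.le_sub_one_of_lt hℓ)]
        apply h2
        rw [hsplit, hw]
        have : (↑w⁻¹ : R) * (t ^ (ℓ+1) * b) * t ^ (e-1-ℓ) = ↑w⁻¹ * b * t ^ (ℓ+1+(e-1-ℓ)) := by
          rw [pow_add]; ring
        rw [this]
        have harith : ℓ + 1 + (e-1-ℓ) = e := by omega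
        rw [harith, h1, mul_zero]
      · exact h3 r hu
    · intro hmem
      obtain ⟨c, hc⟩ := Ideal.mem_span_singleton.1 hmem
      rw [Ideal.mem_span_singleton, hc]
      exact ⟨c, by rw [pow_succ]; ring⟩
  -- range of multiplication map
  have hrange : ∀ ℓ : ℕ, LinearMap.range (LinearMap.mulRight R (t ^ ℓ)) = Ideal.span {t ^ ℓ} := by
    intro ℓ
    ext x
    simp only [LinearMap.mem_range, LinearMap.mulRight_apply, Ideal.mem_span_singleton]
    constructor
    · rintro ⟨y, rfl⟩; exact ⟨y, mul_comm y _⟩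
    · rintro ⟨c, rfl⟩; exact ⟨c, mul_comm c _⟩
  -- step
  have step : ∀ ℓ < e, Nat.card (R ⧸ Ideal.span {t ^ (ℓ+1)}) =
      q * Nat.card (R ⧸ Ideal.span {t ^ ℓ}) := by
    intro ℓ hℓ
    set I := Ideal.span {t ^ ℓ} with hI
    set J := Ideal.span {t ^ (ℓ+1)} with hJ
    have hJI : J ≤ I := by
      rw [hJ, hI, Ideal.span_singleton_le_span_singleton]
      exact pow_dvd_pow t (Nat.le_succ ℓ)
    set φ : R →ₗ[R] R ⧸ J := (J.mkQ).comp (LinearMap.mulRight R (t ^ ℓ)) with hφ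
    have hker : LinearMap.ker φ = (Ideal.span {t} : Ideal R) := by
      ext x
      simp only [hφ, LinearMap.mem_ker, LinearMap.comp_apply, LinearMap.mulRight_apply,
        Submodule.mkQ_apply, Submodule.Quotient.mk_eq_zero]
      exact key ℓ hℓ x
    have hrng : LinearMap.range φ = Submodule.map J.mkQ I := by
      rw [hφ, LinearMap.range_comp, hrange]
    have hcard1 : Nat.card (Submodule.map J.mkQ I) = q := by
      rw [hq, ← hrng, ← hker]
      exact (Nat.card_congr (φ.quotKerEquivRange).toEquiv).symm
    have := Submodule.card_quotient_mul_card_quotient I J hJI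
    rw [hcard1] at this
    exact this.symm
  -- d ℓ = q ^ ℓ
  have dd : ∀ ℓ ≤ e, Nat.card (R ⧸ Ideal.span {t ^ ℓ}) = q ^ ℓ := by
    intro ℓ hℓ
    induction ℓ with
    | zero =>
      have : (Ideal.span {t ^ 0} : Ideal R) = ⊤ := by
        simp [Ideal.span_singleton_one]
      rw [this, pow_zero]
      haveI : Subsingleton (R ⧸ (⊤ : Ideal R)) :=
        Submodule.Quotient.subsingleton_iff.2 rfl
      exact Nat.card_eq_one_iff_unique.2 ⟨inferInstance, inferInstance⟩
    | succ k ih =>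
      rw [step k (by omega), ih (by omega), pow_succ]
      ring
  -- card R = q ^ e
  have hcardR : Nat.card R = q ^ e := by
    have hbot : (Ideal.span {t ^ e} : Ideal R) = ⊥ := by
      rw [h1, Ideal.span_singleton_eq_bot]
    have := dd e le_rfl
    rw [hbot] at this
    rw [← this]
    exact Nat.card_congr ((Submodule.quotEquivOfEqBot (⊥ : Ideal R) rfl).toEquiv).symm
  -- final
  intro ℓ hℓ
  have h₁ : Nat.card R = Nat.card (Ideal.span {t ^ ℓ}) * Nat.card (R ⧸ Ideal.span {t ^ ℓ}) :=
    Submodule.card_eq_card_quotient_mul_card _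
  rw [dd ℓ hℓ, hcardR] at h₁
  haveI : Finite (R ⧸ Ideal.span {t}) :=
    Finite.of_surjective _ (Ideal.Quotient.mk_surjective (I := Ideal.span {t}))
  have hqpos : 0 < q := Nat.card_pos
  have h₂ : q ^ e = q ^ (e - ℓ) * q ^ ℓ := by
    rw [← pow_add, Nat.sub_add_cancel hℓ]
  rw [h₂] at h₁
  exact Nat.eq_of_mul_eq_mul_right (pow_pos hqpos ℓ) h₁.symm

end Chain

theorem aux_charP {R : Type*} [NonAssocRing R] [Nontrivial R] {p : ℕ} (hp : p.Prime)
    (h : (p : R) = 0) : CharP R p := by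
  rcases (Nat.dvd_prime hp).1 (ringChar.dvd h) with h1 | h1
  · haveI : CharP R 1 := ringChar.of_eq h1
    exact (CharP.false_of_nontrivial_of_char_one (R := R)).elim
  · exact ringChar.of_eq h1


/-- if `α₁ + α₃v` is a non-square unit of `S = F_{p^m} + vF_{p^m}` and
`α₀^{p^s} = α₁`, then `S[x]/⟨x^{2p^s} − (α₁ + α₃v)⟩` is a chain ring whose ideals are
exactly `⟨(x² − α₀)^ℓ⟩`, `0 ≤ ℓ ≤ 2p^s`, and `⟨(x² − α₀)^ℓ⟩` has `p^{2m(2p^s − ℓ)}`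
elements. -/
theorem stmt11 {p m s : ℕ} (hp : p.Prime) (hodd : p ≠ 2) (hm : 0 < m) (hs : 0 < s)
    {F : Type*} [Field F] [Fintype F] [CharP F p] (hF : Fintype.card F = p ^ m)
    (α₀ α₁ α₃ : F) (hα₁ : α₁ ≠ 0) (hα₃ : α₃ ≠ 0) (h0 : α₀ ^ p ^ s = α₁)
    (hns : ¬ IsSquare (inl α₁ + (inr α₃ : DualNumber F))) :
    (∀ I J : Ideal (AdjoinRoot ((X : (DualNumber F)[X]) ^ (2 * p ^ s) -
        C (inl α₁ + (inr α₃ : DualNumber F)))), I ≤ J ∨ J ≤ I) ∧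
    (∀ I : Ideal (AdjoinRoot ((X : (DualNumber F)[X]) ^ (2 * p ^ s) -
        C (inl α₁ + (inr α₃ : DualNumber F)))),
      ∃ ℓ ≤ 2 * p ^ s,
        I = Ideal.span {(AdjoinRoot.root _ ^ 2 - AdjoinRoot.of _ (inl α₀)) ^ ℓ}) ∧
    (∀ ℓ ≤ 2 * p ^ s,
      Nat.card (Ideal.span {(AdjoinRoot.root ((X : (DualNumber F)[X]) ^ (2 * p ^ s) -
            C (inl α₁ + (inr α₃ : DualNumber F))) ^ 2 -
          AdjoinRoot.of _ (inl α₀)) ^ ℓ}) = p ^ (2 * m * (2 * p ^ s - ℓ))) := by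
  classical
  haveI : Fact p.Prime := ⟨hp⟩
  set a : DualNumber F := inl α₁ + inr α₃ with ha
  set f : (DualNumber F)[X] := X ^ (2 * p ^ s) - C a with hf
  set t : AdjoinRoot f := AdjoinRoot.root f ^ 2 - AdjoinRoot.of f (inl α₀) with htdef
  set e := 2 * p ^ s with he'
  have hps : 0 < p ^ s := pow_pos hp.pos s
  have he : 0 < e := by omega
  have hmon : f.Monic := monic_X_pow_sub_C a (by omega)
  have hdeg : f.natDegree = e := natDegree_X_pow_sub_C
  haveI : Nontrivial (AdjoinRoot f) := by
    refine nontrivial_of_ne 1 0 fun h => ?_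
    have : f ∣ 1 := AdjoinRoot.mk_eq_zero.1 (by rw [map_one, h])
    obtain ⟨u, hu⟩ := this
    have hu0 : u ≠ 0 := fun h0 => by simp [h0] at hu
    have := hmon.natDegree_mul' hu0
    rw [← hu, natDegree_one, hdeg] at this
    omega
  haveI : CharP (DualNumber F) p :=
    charP_of_injective_ringHom (f := TrivSqZeroExt.inlHom F F) TrivSqZeroExt.inl_injective p
  haveI : CharP (AdjoinRoot f) p :=
    aux_charP hp (by rw [← map_natCast (AdjoinRoot.of f) p, CharP.cast_eq_zero, map_zero])
  haveI : Finite (DualNumber F) := Finite.of_equiv (F × F) (Equiv.refl _)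
  haveI : Finite (AdjoinRoot f) :=
    Finite.of_equiv _ ((AdjoinRoot.powerBasis' hmon).basis.equivFun.toEquiv).symm
  -- the root relation
  have hroot : AdjoinRoot.root f ^ e = AdjoinRoot.of f a := by
    have h := AdjoinRoot.mk_self (f := f)
    rw [hf] at h
    rw [map_sub, map_pow, AdjoinRoot.mk_X, AdjoinRoot.mk_C, sub_eq_zero] at h
    rw [← hf] at h
    exact h
  -- t ^ (p ^ s) = inr α₃
  have hts : t ^ p ^ s = AdjoinRoot.of f (inr α₃) := by
    rw [htdef, sub_pow_char_pow]
    have h2' : (AdjoinRoot.root f ^ 2) ^ p ^ s = AdjoinRoot.root f ^ e := by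
      rw [← pow_mul, he', mul_comm]
    rw [h2', hroot, ← map_pow, inl_pow, h0, ← map_sub]
    congr 1
    rw [ha, add_sub_cancel_left]
  have h1 : t ^ e = 0 := by
    rw [he', mul_comm 2 (p ^ s), pow_mul, hts, ← map_pow, sq, inr_mul_inr, map_zero]
  have htm : t = AdjoinRoot.mk f (X ^ 2 - C (inl α₀)) := by
    rw [htdef, map_sub, map_pow, AdjoinRoot.mk_X, AdjoinRoot.mk_C]
  have h2 : t ^ (e - 1) ≠ 0 := by
    intro hzero
    set g₂ : (DualNumber F)[X] := C (inr α₃ : DualNumber F) * (X ^ 2 - C (inl α₀)) ^ (p ^ s - 1)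
      with hg₂
    have hpmon : ((X : (DualNumber F)[X]) ^ 2 - C (inl α₀)).Monic :=
      monic_X_pow_sub_C _ two_ne_zero
    have hinr3 : (inr α₃ : DualNumber F) ≠ 0 := fun h =>
      hα₃ (by simpa using congrArg TrivSqZeroExt.snd h)
    have hte1 : t ^ (e - 1) = AdjoinRoot.mk f g₂ := by
      have hsplit : e - 1 = p ^ s + (p ^ s - 1) := by omega
      rw [hsplit, pow_add, hts, htm, ← map_pow, ← AdjoinRoot.mk_C (f := f) (x := inr α₃),
        ← map_mul, ← hg₂]
    have hzero2 : AdjoinRoot.mk f g₂ = 0 := by rw [← hte1, hzero]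
    have hdvd := AdjoinRoot.mk_eq_zero.1 hzero2
    have hg₂ne : g₂ ≠ 0 := by
      intro h
      have hc := congrArg (fun q => Polynomial.coeff q (2 * (p ^ s - 1))) h
      simp only [hg₂, coeff_C_mul, coeff_zero] at hc
      rw [show 2 * (p ^ s - 1) = ((X ^ 2 - C (inl α₀ : DualNumber F)) ^ (p ^ s - 1)).natDegree by
          rw [hpmon.natDegree_pow, natDegree_X_pow_sub_C, mul_comm],
        (hpmon.pow _).coeff_natDegree, mul_one] at hc
      exact hinr3 hc
    obtain ⟨u, hu⟩ := hdvd
    have hu0 : u ≠ 0 := fun h => hg₂ne (by rw [hu, h, mul_zero])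
    have hdegeq := hmon.natDegree_mul' hu0
    rw [← hu, hdeg] at hdegeq
    have hdegle : g₂.natDegree ≤ 2 * (p ^ s - 1) := by
      refine le_trans (natDegree_mul_le) ?_
      rw [natDegree_C, hpmon.natDegree_pow, natDegree_X_pow_sub_C]
      omega
    omega
  -- α₀ is not a square
  have hsq : ∀ b : F, b ^ 2 ≠ α₀ := by
    intro b hb
    apply hns
    have hc0 : b ^ p ^ s ≠ 0 := by
      intro h
      have hb0 : b = 0 := by
        have hpsne : p ^ s ≠ 0 := by positivity
        exact (pow_eq_zero_iff hpsne).1 h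
      apply hα₁
      rw [← h0, ← hb, hb0, zero_pow two_ne_zero, zero_pow (by positivity : p ^ s ≠ 0)]
    set c : F := b ^ p ^ s with hc
    have hc2 : c * c = α₁ := by
      rw [hc, ← h0, ← hb]; ring
    have h2F : (2 : F) ≠ 0 := by
      intro h
      have hd : (p : ℕ) ∣ 2 := (CharP.cast_eq_zero_iff F p 2).1 (by exact_mod_cast h)
      have := Nat.le_of_dvd (by norm_num) hd
      have := hp.two_le
      omega
    refine ⟨inl c + inr (α₃ / (2 * c)), ?_⟩
    rw [ha]
    ext
    · simp [hc2.symm]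
    · simp [snd_mul, op_smul_eq_mul, smul_eq_mul]
      field_simp
      ring
  set g : F[X] := X ^ 2 - C α₀ with hgdef
  have hgmon : g.Monic := monic_X_pow_sub_C α₀ two_ne_zero
  have hgirr : Irreducible g := X_pow_sub_C_irreducible_of_prime Nat.prime_two hsq
  haveI : Fact (Irreducible g) := ⟨hgirr⟩
  set Qmk := Ideal.Quotient.mk (Ideal.span {t}) with hQmk
  have htop : Ideal.span {t} ≠ ⊤ := by
    intro htop
    obtain ⟨c, hc⟩ := Ideal.mem_span_singleton.1
      (htop ▸ Submodule.mem_top : (1 : AdjoinRoot f) ∈ Ideal.span {t})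
    have : (1 : AdjoinRoot f) = 0 := by
      calc (1 : AdjoinRoot f) = 1 ^ e := (one_pow e).symm
      _ = (t * c) ^ e := by rw [← hc]
      _ = t ^ e * c ^ e := mul_pow t c e
      _ = 0 := by rw [h1, zero_mul]
    exact one_ne_zero this
  haveI : Nontrivial (AdjoinRoot f ⧸ Ideal.span {t}) := Ideal.Quotient.nontrivial_iff.mpr htop
  have hi : Polynomial.eval₂
      (Qmk.comp ((AdjoinRoot.of f).comp (algebraMap F (DualNumber F))))
      (Qmk (AdjoinRoot.root f)) g = 0 := by
    rw [hgdef]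
    rw [eval₂_sub, eval₂_pow, eval₂_X, eval₂_C, RingHom.comp_apply, RingHom.comp_apply]
    rw [TrivSqZeroExt.algebraMap_eq_inl', Algebra.algebraMap_self, RingHom.id_apply,
      ← map_pow, ← map_sub, ← htdef]
    exact Ideal.Quotient.eq_zero_iff_mem.2 (Ideal.mem_span_singleton_self t)
  set χ : AdjoinRoot g →+* (AdjoinRoot f ⧸ Ideal.span {t}) :=
    AdjoinRoot.lift _ _ hi with hχ
  have hinl : ∀ b : F, χ (AdjoinRoot.of g b) = Qmk (AdjoinRoot.of f (inl b)) := by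
    intro b
    rw [hχ, AdjoinRoot.lift_of, RingHom.comp_apply, RingHom.comp_apply,
      TrivSqZeroExt.algebraMap_eq_inl', Algebra.algebraMap_self, RingHom.id_apply]
  have hrootχ : χ (AdjoinRoot.root g) = Qmk (AdjoinRoot.root f) := by
    rw [hχ, AdjoinRoot.lift_root]
  have hinr : ∀ c : F, Qmk (AdjoinRoot.of f (inr c)) = 0 := by
    intro c
    have h1' : (inr c : DualNumber F) = inl (c / α₃) * inr α₃ := by
      rw [inl_mul_inr]
      rw [smul_eq_mul, div_mul_cancel₀ c hα₃]
    rw [h1', map_mul, ← hts, map_mul]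
    have : Qmk (t ^ p ^ s) = 0 := by
      rw [hQmk, Ideal.Quotient.eq_zero_iff_mem]
      exact Ideal.mem_span_singleton.2 (dvd_pow_self t (by omega))
    rw [this, mul_zero]
  have hrange0 : ∀ y : DualNumber F, Qmk (AdjoinRoot.of f y) ∈ χ.range := by
    intro y
    have hy : y = inl (fst y) + inr (snd y) := (inl_fst_add_inr_snd_eq y).symm
    rw [hy, map_add, map_add]
    refine add_mem ⟨AdjoinRoot.of g (fst y), (hinl _)⟩ ?_
    rw [hinr]
    exact zero_mem _
  have hsurj : Function.Surjective χ := by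
    intro y
    obtain ⟨r, rfl⟩ := Ideal.Quotient.mk_surjective y
    show Qmk r ∈ χ.range
    induction r using AdjoinRoot.induction_on with
    | ih q =>
      induction q using Polynomial.induction_on with
      | C b => simpa only [AdjoinRoot.mk_C] using hrange0 b
      | add q r hq hr => rw [map_add, map_add]; exact add_mem hq hr
      | monomial n b hb =>
        rw [show (C b * X ^ (n+1) : (DualNumber F)[X]) = (C b * X ^ n) * X by ring]
        rw [map_mul, map_mul]
        refine mul_mem hb ⟨AdjoinRoot.root g, ?_⟩
        rw [hrootχ, AdjoinRoot.mk_X]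
  have hinj : Function.Injective χ := χ.injective
  have h3 : ∀ r : AdjoinRoot f, ¬ IsUnit r → r ∈ Ideal.span {t} := by
    intro r hr
    by_contra hmem
    have h0' : Qmk r ≠ 0 := fun h => hmem (Ideal.Quotient.eq_zero_iff_mem.1 h)
    obtain ⟨k, hk⟩ := hsurj (Qmk r)
    have hk0 : k ≠ 0 := fun h => h0' (by rw [← hk, h, map_zero])
    obtain ⟨b, hb⟩ := Ideal.Quotient.mk_surjective (χ k⁻¹)
    have hone : Qmk (b * r) = 1 := by
      rw [map_mul, hb, ← hk, ← map_mul, inv_mul_cancel₀ hk0, map_one]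
    have hmem2 : b * r - 1 ∈ Ideal.span {t} :=
      Ideal.Quotient.eq_zero_iff_mem.1 (by rw [map_sub, hone, map_one, sub_self])
    obtain ⟨c, hc⟩ := Ideal.mem_span_singleton.1 hmem2
    have hnil : IsNilpotent (t * c) := ⟨e, by rw [mul_pow, h1, zero_mul]⟩
    have hunit : IsUnit (b * r) := by
      have : b * r = 1 + t * c := by rw [← hc]; ring
      rw [this]
      exact hnil.isUnit_one_add
    exact hr (isUnit_of_mul_isUnit_right hunit)
  have hq : Nat.card (AdjoinRoot f ⧸ Ideal.span {t}) = p ^ (2 * m) := by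
    rw [← Nat.card_congr (Equiv.ofBijective χ ⟨hinj, hsurj⟩)]
    have bK := (AdjoinRoot.powerBasis' hgmon).basis
    rw [Nat.card_congr bK.equivFun.toEquiv, Nat.card_fun, Nat.card_eq_fintype_card (α := F), hF]
    simp only [AdjoinRoot.powerBasis'_dim, Nat.card_eq_fintype_card, Fintype.card_fin]
    rw [hgdef, natDegree_X_pow_sub_C, ← pow_mul, mul_comm m 2]
  refine ⟨?_, ?_, ?_⟩
  · intro I J
    obtain ⟨ℓI, -, hI⟩ := chain_ideal he h1 h3 I
    obtain ⟨ℓJ, -, hJ⟩ := chain_ideal he h1 h3 J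
    rcases le_total ℓI ℓJ with h | h
    · right
      rw [hI, hJ, Ideal.span_singleton_le_span_singleton]
      exact pow_dvd_pow t h
    · left
      rw [hI, hJ, Ideal.span_singleton_le_span_singleton]
      exact pow_dvd_pow t h
  · intro I
    exact chain_ideal he h1 h3 I
  · intro ℓ hℓ
    have := chain_card he h1 h2 h3 ℓ hℓ
    rw [hq] at this
    rw [this, ← pow_mul]
end

section
/- Let α be a non-square unit of F_{p^m} with α₀^{p^s} = α, p odd. For 1 ≤ ℓ ≤ p^{s−1}, the Hamming distance of the constacyclic code C = ⟨(x² − α₀)^ℓ⟩ ⊆ F_{p^m}[x]/⟨x^{2p^s} − α⟩ equals 2. -/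
open Polynomial

/-- The polynomial representation of a coefficient vector in `R[x]/⟨f⟩`. -/
noncomputable def vecToQ {R : Type*} [CommRing R] (f : R[X]) {n : ℕ} (c : Fin n → R) :
    AdjoinRoot f :=
  ∑ i : Fin n, AdjoinRoot.of f (c i) * AdjoinRoot.root f ^ (i : ℕ)

/-- The Hamming weight of a coefficient vector. -/
noncomputable def wtH {R : Type*} [Zero R] {n : ℕ} (c : Fin n → R) : ℕ :=
  {i : Fin n | c i ≠ 0}.ncard

/-- The minimum Hamming distance of a linear code given as an ideal of `R[x]/⟨f⟩`,
codewords being identified with coefficient vectors of length `n`. -/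
noncomputable def dHam {R : Type*} [CommRing R] (f : R[X]) (n : ℕ)
    (I : Ideal (AdjoinRoot f)) : ℕ :=
  sInf {w : ℕ | ∃ c : Fin n → R, c ≠ 0 ∧ vecToQ f c ∈ I ∧ w = wtH c}

/-- for `α` a non-square unit of `F_{p^m}` with `α₀^{p^s} = α` and
`1 ≤ ℓ ≤ p^{s-1}`, the Hamming distance of `C = ⟨(x² − α₀)^ℓ⟩ ⊆ F_{p^m}[x]/⟨x^{2p^s} − α⟩`
equals `2`. -/
theorem stmt12 {p m s : ℕ} (hp : p.Prime) (hodd : p ≠ 2) (hm : 0 < m) (hs : 0 < s)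
    {F : Type*} [Field F] [Fintype F] [CharP F p] (hF : Fintype.card F = p ^ m)
    (α α₀ : F) (hα : α ≠ 0) (hsq : ¬ IsSquare α) (h0 : α₀ ^ p ^ s = α)
    (ℓ : ℕ) (h1 : 1 ≤ ℓ) (h2 : ℓ ≤ p ^ (s - 1)) :
    dHam ((X : F[X]) ^ (2 * p ^ s) - C α) (2 * p ^ s)
      (Ideal.span {(AdjoinRoot.root ((X : F[X]) ^ (2 * p ^ s) - C α) ^ 2 -
        AdjoinRoot.of _ α₀) ^ ℓ}) = 2 := by
  haveI := Fact.mk hp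
  set n := 2 * p ^ s with hn
  set f : F[X] := X ^ (2 * p ^ s) - C α with hf
  set r : AdjoinRoot f := AdjoinRoot.root f with hr
  set g : AdjoinRoot f := r ^ 2 - AdjoinRoot.of f α₀ with hg
  have hα₀ : α₀ ≠ 0 := by
    rintro rfl
    exact hα (by rw [← h0, zero_pow (pow_ne_zero s hp.pos.ne')])
  -- Frobenius identity in F[X]
  have key : ∀ t : ℕ, ((X : F[X]) ^ 2 - C α₀) ^ p ^ t = X ^ (2 * p ^ t) - C (α₀ ^ p ^ t) := by
    intro t
    rw [sub_pow_char_pow, ← pow_mul, mul_comm (2 : ℕ), ← C_pow, mul_comm (p ^ t)]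
  have hff : f = ((X : F[X]) ^ 2 - C α₀) ^ p ^ s := by rw [key, h0]
  -- r ^ n = of α
  have hrn : r ^ n = AdjoinRoot.of f α := by
    have h := AdjoinRoot.mk_self (f := f)
    rw [hf] at h
    rw [map_sub, map_pow, AdjoinRoot.mk_X, AdjoinRoot.mk_C, sub_eq_zero] at h
    exact h
  -- g is not a unit
  have hdeg : ((X : F[X]) ^ 2 - C α₀).degree ≠ 0 := by
    have : ((X : F[X]) ^ 2 - C α₀).degree = 2 := by
      rw [sub_eq_add_neg, ← C_neg]
      exact_mod_cast Polynomial.degree_X_pow_add_C (by norm_num) (-α₀)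
    rw [this]; decide
  haveI : Nontrivial (AdjoinRoot ((X : F[X]) ^ 2 - C α₀)) := AdjoinRoot.nontrivial _ hdeg
  have hev : f.eval₂ (AdjoinRoot.of ((X : F[X]) ^ 2 - C α₀))
      (AdjoinRoot.root ((X : F[X]) ^ 2 - C α₀)) = 0 := by
    rw [hff]
    rw [eval₂_pow, AdjoinRoot.eval₂_root, zero_pow (pow_ne_zero s hp.pos.ne')]
  set φ : AdjoinRoot f →+* AdjoinRoot ((X : F[X]) ^ 2 - C α₀) :=
    AdjoinRoot.lift _ _ hev with hφ
  have hφg : φ g = 0 := by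
    have : φ g = (AdjoinRoot.root ((X : F[X]) ^ 2 - C α₀)) ^ 2 -
        AdjoinRoot.of _ α₀ := by
      rw [hg, map_sub, map_pow, hφ, AdjoinRoot.lift_root, AdjoinRoot.lift_of]
    rw [this]
    have := AdjoinRoot.eval₂_root ((X : F[X]) ^ 2 - C α₀)
    simpa using this
  have hgu : ¬ IsUnit g := by
    intro h
    have := h.map φ
    rw [hφg] at this
    exact not_isUnit_zero this
  -- every element of a*r^i is a unit
  have hn0 : 0 < n := Nat.mul_pos (by norm_num) (pow_pos hp.pos s)
  have hunit : ∀ (a : F), a ≠ 0 → ∀ i : ℕ, i < n → IsUnit (AdjoinRoot.of f a * r ^ i) := by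
    intro a ha i hi
    apply IsUnit.of_mul_eq_one (AdjoinRoot.of f (a⁻¹ * α⁻¹) * r ^ (n - i))
    rw [mul_mul_mul_comm, ← pow_add, Nat.add_sub_cancel' hi.le, hrn, ← map_mul, ← map_mul]
    rw [show a * (a⁻¹ * α⁻¹) * α = (a * a⁻¹) * (α⁻¹ * α) by ring,
      mul_inv_cancel₀ ha, inv_mul_cancel₀ hα, one_mul, map_one]
  set S : Set ℕ := {w : ℕ | ∃ c : Fin n → F, c ≠ 0 ∧
    vecToQ f c ∈ Ideal.span {g ^ ℓ} ∧ w = wtH c} with hS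
  -- the weight-2 codeword
  set t : ℕ := p ^ (s - 1) with htdef
  have htn : 2 * t < n := by
    have : t < p ^ s := pow_lt_pow_right₀ hp.one_lt (by omega)
    omega
  have ht0 : 0 < t := pow_pos hp.pos _
  set c₀ : Fin n → F := fun i => if (i : ℕ) = 0 then -α₀ ^ t
    else if (i : ℕ) = 2 * t then 1 else 0 with hc₀
  have hi01 : (⟨0, hn0⟩ : Fin n) ≠ ⟨2 * t, htn⟩ := by
    intro h
    have := Fin.mk.injEq 0 hn0 (2 * t) htn ▸ h
    omega
  have hc00 : c₀ ⟨0, hn0⟩ = -α₀ ^ t := by simp [hc₀]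
  have hc01 : c₀ ⟨2 * t, htn⟩ = 1 := by simp [hc₀, ht0.ne']
  have hc₀ne : c₀ ≠ 0 := by
    intro h
    have := congrFun h ⟨0, hn0⟩
    rw [hc00] at this
    simp only [Pi.zero_apply, neg_eq_zero] at this
    exact pow_ne_zero t hα₀ this
  have hvec : vecToQ f c₀ = r ^ (2 * t) - AdjoinRoot.of f (α₀ ^ t) := by
    rw [vecToQ]
    have hsub : ∑ i : Fin n, AdjoinRoot.of f (c₀ i) * AdjoinRoot.root f ^ (i : ℕ) =
        ∑ i ∈ (insert (⟨0, hn0⟩ : Fin n) {(⟨2 * t, htn⟩ : Fin n)}),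
          AdjoinRoot.of f (c₀ i) * AdjoinRoot.root f ^ (i : ℕ) := by
      refine (Finset.sum_subset (Finset.subset_univ _) ?_).symm
      intro i _ hi
      simp only [Finset.mem_insert, Finset.mem_singleton] at hi
      push_neg at hi
      have h1 : (i : ℕ) ≠ 0 := fun h => hi.1 (Fin.ext h)
      have h2 : (i : ℕ) ≠ 2 * t := fun h => hi.2 (Fin.ext h)
      simp only [hc₀, if_neg h1, if_neg h2, map_zero, zero_mul]
    rw [hsub, Finset.sum_insert (by simp [hi01, ht0.ne']), Finset.sum_singleton, hc00, hc01]
    rw [map_one, map_neg, one_mul, pow_zero, mul_one]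
    ring
  have hgt : g ^ t = r ^ (2 * t) - AdjoinRoot.of f (α₀ ^ t) := by
    have : g = AdjoinRoot.mk f ((X : F[X]) ^ 2 - C α₀) := by
      rw [hg, map_sub, map_pow, AdjoinRoot.mk_X, AdjoinRoot.mk_C]
    rw [this, ← map_pow, key, map_sub, map_pow, AdjoinRoot.mk_X, AdjoinRoot.mk_C]
  have hmem : vecToQ f c₀ ∈ Ideal.span {g ^ ℓ} := by
    rw [hvec, ← hgt, show t = ℓ + (t - ℓ) by omega, pow_add]
    exact Ideal.mul_mem_right _ _ (Ideal.subset_span rfl)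
  have hwt : wtH c₀ = 2 := by
    rw [wtH]
    have : {i : Fin n | c₀ i ≠ 0} = {⟨0, hn0⟩, ⟨2 * t, htn⟩} := by
      ext i
      simp only [Set.mem_setOf_eq, Set.mem_insert_iff, Set.mem_singleton_iff]
      constructor
      · intro h
        by_contra hcon
        push_neg at hcon
        have h1 : (i : ℕ) ≠ 0 := fun hh => hcon.1 (Fin.ext hh)
        have h2 : (i : ℕ) ≠ 2 * t := fun hh => hcon.2 (Fin.ext hh)
        simp only [hc₀, if_neg h1, if_neg h2] at h; exact h rfl
      · rintro (rfl | rfl)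
        · rw [hc00]; simp [pow_ne_zero t hα₀]
        · rw [hc01]; simp
    rw [this, Set.ncard_pair hi01]
  have h2S : 2 ∈ S := ⟨c₀, hc₀ne, hmem, hwt.symm⟩
  have hlb : ∀ w ∈ S, 2 ≤ w := by
    rintro w ⟨c, hcne, hcI, rfl⟩
    by_contra hcon
    push_neg at hcon
    obtain ⟨i₀, hi₀⟩ : ∃ i, c i ≠ 0 := by
      by_contra h
      push_neg at h
      exact hcne (funext h)
    have hle1 : {i : Fin n | c i ≠ 0}.ncard ≤ 1 := by
      have : wtH c ≤ 1 := by omega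
      rwa [wtH] at this
    have huniq : ∀ j, c j ≠ 0 → j = i₀ := fun j hj =>
      (Set.ncard_le_one (Set.toFinite _)).mp hle1 j hj i₀ hi₀
    have hview : vecToQ f c = AdjoinRoot.of f (c i₀) * r ^ (i₀ : ℕ) := by
      rw [vecToQ]
      apply Finset.sum_eq_single
      · intro j _ hj
        have : c j = 0 := by
          by_contra h
          exact hj (huniq j h)
        simp [this]
      · intro h
        exact absurd (Finset.mem_univ _) h
    have hu := hunit (c i₀) hi₀ (i₀ : ℕ) i₀.isLt
    rw [← hview] at hu
    have hspan : Ideal.span {g ^ ℓ} ≤ Ideal.span {g} :=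
      Ideal.span_singleton_le_span_singleton.mpr (dvd_pow_self g (by omega))
    have : Ideal.span {g} = ⊤ := Ideal.eq_top_of_isUnit_mem _ (hspan hcI) hu
    exact hgu (Ideal.span_singleton_eq_top.mp this)
  rw [dHam]
  exact le_antisymm (Nat.sInf_le h2S) (hlb _ (Nat.sInf_mem ⟨2, h2S⟩))
end

section
/- Let α = α₁ + α₂u + α₃v + α₄uv be a non-square unit of R = F_{p^m}[u,v]/⟨u², v², uv−vu⟩ with α₁, α₂, α₃ ∈ F_{p^m}^*, and C = ⟨u(x² − α₀)^ℓ⟩ ⊆ R[x]/⟨x^{2p^s} − α⟩ with 0 ≤ ℓ ≤ p^s. Then the minimum Hamming distance of C equals 1. -/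
set_option synthInstance.maxHeartbeats 1000000
set_option maxHeartbeats 1000000

open TrivSqZeroExt Polynomial

/-- The ring `R = F_{p^m}[u,v]/⟨u², v², uv - vu⟩`, modeled as dual numbers over
dual numbers: the outer `ε` plays the role of `u`, the inner one of `v`. -/
abbrev Rring (F : Type*) [Field F] : Type _ := DualNumber (DualNumber F)

/-- The element `u` of `R`. -/
noncomputable def uElem (F : Type*) [Field F] : Rring F := inr 1

/-- The element `v` of `R`. -/
noncomputable def vElem (F : Type*) [Field F] : Rring F := inl (inr 1)

/-- The embedding of the field `F` into `R`. -/
noncomputable def cF {F : Type*} [Field F] (a : F) : Rring F := inl (inl a)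

noncomputable instance iCRX {F : Type*} [Field F] : CommRing ((Rring F)[X]) := by
  exact Polynomial.commRing (R := Rring F)

noncomputable instance iCharR {F : Type*} [Field F] {p : ℕ} [CharP F p] : CharP (Rring F) p :=
  charP_of_injective_ringHom
    (f := (TrivSqZeroExt.inlHom (TrivSqZeroExt F F) (TrivSqZeroExt F F)).comp
      (TrivSqZeroExt.inlHom F F))
    (TrivSqZeroExt.inl_injective.comp TrivSqZeroExt.inl_injective) p

noncomputable instance iCharRX {F : Type*} [Field F] {p : ℕ} [CharP F p] :
    CharP ((Rring F)[X]) p :=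
  charP_of_injective_ringHom (f := Polynomial.C (R := Rring F)) Polynomial.C_injective p

lemma uMulAux {F : Type*} [Field F] (α₂ α₃ α₄ : F) :
    uElem F * (cF α₂ * uElem F + cF α₃ * vElem F + cF α₄ * (uElem F * vElem F))
      = cF α₃ * (uElem F * vElem F) := by
  unfold uElem vElem cF
  ext <;> simp [TrivSqZeroExt.ext_iff, fst_mul, snd_mul, smul_eq_mul, mul_comm]

lemma uvNeZero {F : Type*} [Field F] (α₃ : F) (h : α₃ ≠ 0) :
    cF α₃ * (uElem F * vElem F) ≠ 0 := by
  unfold uElem vElem cF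
  simp [TrivSqZeroExt.ext_iff, fst_mul, snd_mul, h]

lemma frobAux {F : Type*} [Field F] {p s : ℕ} [Fact p.Prime] [CharP F p] (α₀ : F) :
    ((X : (Rring F)[X]) ^ 2 - C (cF α₀)) ^ p ^ s
      = X ^ (2 * p ^ s) - C (cF (α₀ ^ p ^ s)) := by
  rw [sub_pow_char_pow (R := (Rring F)[X]) (p := p), ← pow_mul, mul_comm 2, ← map_pow]
  congr 2
  unfold cF
  simp [← TrivSqZeroExt.inl_pow]

/-- with `α = α₁ + α₂u + α₃v + α₄uv` a non-square unit of `R`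
(`α₁, α₂, α₃ ∈ F*`), `α₀^{p^s} = α₁`, and `0 ≤ ℓ ≤ p^s`, the Hamming distance of
`C = ⟨u(x² − α₀)^ℓ⟩ ⊆ R[x]/⟨x^{2p^s} − α⟩` equals `1`. -/
theorem stmt14 {p m s : ℕ} (hp : p.Prime) (hodd : p ≠ 2) (hm : 0 < m) (hs : 0 < s)
    {F : Type*} [Field F] [Fintype F] [CharP F p] (hF : Fintype.card F = p ^ m)
    (α₀ α₁ α₂ α₃ α₄ : F) (hα₁ : α₁ ≠ 0) (hα₂ : α₂ ≠ 0) (hα₃ : α₃ ≠ 0)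
    (h0 : α₀ ^ p ^ s = α₁)
    (hns : ¬ IsSquare (cF α₁ + cF α₂ * uElem F + cF α₃ * vElem F + cF α₄ * (uElem F * vElem F)))
    (ℓ : ℕ) (hℓ : ℓ ≤ p ^ s) :
    dHam ((X : (Rring F)[X]) ^ (2 * p ^ s) -
        C (cF α₁ + cF α₂ * uElem F + cF α₃ * vElem F + cF α₄ * (uElem F * vElem F)))
      (2 * p ^ s)
      (Ideal.span {AdjoinRoot.of _ (uElem F) *
        (AdjoinRoot.root ((X : (Rring F)[X]) ^ (2 * p ^ s) -
            C (cF α₁ + cF α₂ * uElem F + cF α₃ * vElem F + cF α₄ * (uElem F * vElem F))) ^ 2 -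
          AdjoinRoot.of _ (cF α₀)) ^ ℓ}) = 1 := by
  haveI : Fact p.Prime := ⟨hp⟩
  have hn : 0 < 2 * p ^ s := by have := hp.pos; positivity
  haveI : NeZero (2 * p ^ s) := ⟨hn.ne'⟩
  set A : Rring F := cF α₁ + cF α₂ * uElem F + cF α₃ * vElem F + cF α₄ * (uElem F * vElem F)
    with hA
  set f : (Rring F)[X] := X ^ (2 * p ^ s) - C A with hf
  set a : Rring F := cF α₃ * (uElem F * vElem F) with ha
  have ha0 : a ≠ 0 := uvNeZero α₃ hα₃
  set c : Fin (2 * p ^ s) → Rring F := Pi.single 0 a with hc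
  -- the key algebraic identity
  have hroot : (AdjoinRoot.root f ^ 2 - AdjoinRoot.of f (cF α₀)) ^ p ^ s
      = AdjoinRoot.of f A - AdjoinRoot.of f (cF α₁) := by
    have h1 : AdjoinRoot.root f ^ 2 - AdjoinRoot.of f (cF α₀)
        = AdjoinRoot.mk f (X ^ 2 - C (cF α₀)) := by
      rw [map_sub, map_pow, AdjoinRoot.mk_X, AdjoinRoot.mk_C]
    rw [h1, ← map_pow, frobAux, map_sub, h0, AdjoinRoot.mk_C, sub_left_inj, ← AdjoinRoot.mk_C,
      AdjoinRoot.mk_eq_mk]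
  have key : AdjoinRoot.of f a
      = (AdjoinRoot.of f (uElem F) * (AdjoinRoot.root f ^ 2 - AdjoinRoot.of f (cF α₀)) ^ ℓ) *
        (AdjoinRoot.root f ^ 2 - AdjoinRoot.of f (cF α₀)) ^ (p ^ s - ℓ) := by
    rw [mul_assoc, ← pow_add, Nat.add_sub_cancel' hℓ, hroot, ← map_sub, ← map_mul]
    congr 1
    have hsub : A - cF α₁ = cF α₂ * uElem F + cF α₃ * vElem F + cF α₄ * (uElem F * vElem F) := by
      rw [hA]; ring
    rw [hsub, uMulAux]
  -- the coefficient vector c has vecToQ equal to `of a`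
  have hvec : vecToQ f c = AdjoinRoot.of f a := by
    unfold vecToQ
    rw [Finset.sum_eq_single (0 : Fin (2 * p ^ s))]
    · simp [hc, Pi.single_eq_same]
    · intro i _ hi
      simp [hc, Pi.single_eq_of_ne hi]
    · simp
  have hc0 : c ≠ 0 := by
    intro h
    exact ha0 (by simpa [hc] using congrFun h 0)
  have hwt : wtH c = 1 := by
    unfold wtH
    have : {i : Fin (2 * p ^ s) | c i ≠ 0} = {0} := by
      ext i
      simp [hc, Pi.single_apply, ha0]
    rw [this, Set.ncard_singleton]
  -- membership of the codeword in the ideal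
  have hmem : vecToQ f c ∈ Ideal.span {AdjoinRoot.of f (uElem F) *
      (AdjoinRoot.root f ^ 2 - AdjoinRoot.of f (cF α₀)) ^ ℓ} := by
    rw [hvec]
    exact Ideal.mem_span_singleton'.mpr
      ⟨(AdjoinRoot.root f ^ 2 - AdjoinRoot.of f (cF α₀)) ^ (p ^ s - ℓ), by rw [mul_comm, ← key]⟩
  -- conclude
  unfold dHam
  set S : Set ℕ := {w : ℕ | ∃ c : Fin (2 * p ^ s) → Rring F,
    c ≠ 0 ∧ vecToQ f c ∈ Ideal.span ({AdjoinRoot.of f (uElem F) *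
      (AdjoinRoot.root f ^ 2 - AdjoinRoot.of f (cF α₀)) ^ ℓ} : Set (AdjoinRoot f)) ∧ w = wtH c} with hS
  have h1 : (1 : ℕ) ∈ S := ⟨c, hc0, hmem, hwt.symm⟩
  have hlb : ∀ w ∈ S, 1 ≤ w := by
    rintro w ⟨c', hc', -, rfl⟩
    obtain ⟨i, hi⟩ := Function.ne_iff.mp hc'
    have : ({i : Fin (2 * p ^ s) | c' i ≠ 0}).Nonempty := ⟨i, by simpa using hi⟩
    exact (Set.ncard_pos (Set.toFinite _)).mpr this
  have hne : S.Nonempty := ⟨1, h1⟩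
  exact le_antisymm (Nat.sInf_le h1) (hlb _ (Nat.sInf_mem hne))
end

section
/- Let α = α₁ + α₂u + α₃v + α₄uv be a non-square unit of R = F_{p^m}[u,v]/⟨u², v², uv−vu⟩ (α₁, α₂, α₃ ∈ F_{p^m}^*), and C = ⟨u(x² − α₀)^ℓ⟩ ⊆ R[x]/⟨x^{2p^s} − α⟩ with 0 ≤ ℓ ≤ p^s. Then the minimum symbol-pair distance of C equals 2. -/
set_option synthInstance.maxHeartbeats 1000000
set_option maxHeartbeats 1000000

open TrivSqZeroExt Polynomial

/-- The cyclic successor of an index `i` in `Fin n`. -/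
def cycSucc {n : ℕ} (i : Fin n) : Fin n := ⟨((i : ℕ) + 1) % n, Nat.mod_lt _ i.pos⟩

/-- The symbol-pair weight of a coefficient vector (cyclic pair reading). -/
noncomputable def wtSP {R : Type*} [Zero R] {n : ℕ} (c : Fin n → R) : ℕ :=
  {i : Fin n | (c i, c (cycSucc i)) ≠ (0, 0)}.ncard

/-- The minimum symbol-pair distance of a linear code given as an ideal of `R[x]/⟨f⟩`,
codewords being identified with coefficient vectors of length `n`. -/
noncomputable def dSP {R : Type*} [CommRing R] (f : Polynomial R) (n : ℕ)
    (I : Ideal (AdjoinRoot f)) : ℕ :=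
  sInf {w : ℕ | ∃ c : Fin n → R, c ≠ 0 ∧ vecToQ f c ∈ I ∧ w = wtSP c}

lemma charP_Rring {F : Type*} [Field F] (p : ℕ) [CharP F p] : CharP (Rring F) p := by
  have h : Function.Injective
      ((TrivSqZeroExt.inlHom (DualNumber F) (DualNumber F)).comp
        (TrivSqZeroExt.inlHom F F)) := by
    intro a b hab
    exact inl_injective (inl_injective hab)
  exact charP_of_injective_ringHom h p

lemma uMulRest {F : Type*} [Field F] (a₂ a₃ a₄ : F) :
    uElem F * (cF a₂ * uElem F + cF a₃ * vElem F + cF a₄ * (uElem F * vElem F)) =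
      cF a₃ * (uElem F * vElem F) := by
  ext <;> simp only [uElem, vElem, cF, fst_mul, snd_mul, fst_add, snd_add, fst_inl, snd_inl,
    fst_inr, snd_inr, smul_eq_mul, op_smul_eq_smul, mul_zero, zero_mul, add_zero, zero_add,
    mul_one, one_mul, smul_zero, zero_smul]

lemma rNeZero {F : Type*} [Field F] {a : F} (h : a ≠ 0) : cF a * (uElem F * vElem F) ≠ 0 := by
  intro hh
  have := congrArg (fun x => snd (snd x)) hh
  simp only [uElem, vElem, cF, fst_mul, snd_mul, fst_add, snd_add, fst_inl, snd_inl,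
    fst_inr, snd_inr, smul_eq_mul, op_smul_eq_smul, mul_zero, zero_mul, add_zero, zero_add,
    mul_one, one_mul, smul_zero, zero_smul, snd_zero, fst_zero] at this
  exact h this

lemma freshman {R : Type*} [CommRing R] {p : ℕ} [Fact p.Prime] [CharP R p] (s : ℕ) (a : R) :
    ((X : R[X]) ^ 2 - C a) ^ p ^ s = X ^ (2 * p ^ s) - C (a ^ p ^ s) := by
  rw [sub_pow_char_pow, ← pow_mul, ← C_pow]

lemma cF_pow {F : Type*} [Field F] (a : F) (k : ℕ) : (cF a) ^ k = cF (a ^ k) := by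
  simp only [cF, inl_pow]


/-- with `α = α₁ + α₂u + α₃v + α₄uv` a non-square unit of `R`
(`α₁, α₂, α₃ ∈ F*`), `α₀^{p^s} = α₁`, and `0 ≤ ℓ ≤ p^s`, the minimum symbol-pair distance of
`C = ⟨u(x² − α₀)^ℓ⟩ ⊆ R[x]/⟨x^{2p^s} − α⟩` equals `2`. -/
theorem stmt19 {p m s : ℕ} (hp : p.Prime) (hodd : p ≠ 2) (hm : 0 < m) (hs : 0 < s)
    {F : Type*} [Field F] [Fintype F] [CharP F p] (hF : Fintype.card F = p ^ m)
    (α₀ α₁ α₂ α₃ α₄ : F) (hα₁ : α₁ ≠ 0) (hα₂ : α₂ ≠ 0) (hα₃ : α₃ ≠ 0)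
    (h0 : α₀ ^ p ^ s = α₁)
    (hns : ¬ IsSquare (cF α₁ + cF α₂ * uElem F + cF α₃ * vElem F + cF α₄ * (uElem F * vElem F)))
    (ℓ : ℕ) (hℓ : ℓ ≤ p ^ s) :
    dSP ((X : (Rring F)[X]) ^ (2 * p ^ s) -
        C (cF α₁ + cF α₂ * uElem F + cF α₃ * vElem F + cF α₄ * (uElem F * vElem F)))
      (2 * p ^ s)
      (Ideal.span {AdjoinRoot.of _ (uElem F) *
        (AdjoinRoot.root ((X : (Rring F)[X]) ^ (2 * p ^ s) -
            C (cF α₁ + cF α₂ * uElem F + cF α₃ * vElem F + cF α₄ * (uElem F * vElem F))) ^ 2 -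
          AdjoinRoot.of _ (cF α₀)) ^ ℓ}) = 2 := by
  haveI : Fact p.Prime := ⟨hp⟩
  haveI : CharP (Rring F) p := charP_Rring p
  set α : Rring F := cF α₁ + cF α₂ * uElem F + cF α₃ * vElem F + cF α₄ * (uElem F * vElem F)
    with hα
  set f : (Rring F)[X] := (X : (Rring F)[X]) ^ (2 * p ^ s) - C α with hf
  set r : Rring F := cF α₃ * (uElem F * vElem F) with hrdef
  have hr : r ≠ 0 := rNeZero hα₃
  set n : ℕ := 2 * p ^ s with hn
  have hn2 : 2 ≤ n := by
    have : 1 ≤ p ^ s := Nat.one_le_pow _ _ hp.pos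
    omega
  have hnpos : 0 < n := by omega
  -- the key identity in AdjoinRoot f
  have hpoly : C (uElem F) * ((X : (Rring F)[X]) ^ 2 - C (cF α₀)) ^ p ^ s
      = C (uElem F) * f + C r := by
    have h1 : ((X : (Rring F)[X]) ^ 2 - C (cF α₀)) ^ p ^ s
        = (X : (Rring F)[X]) ^ (2 * p ^ s) - C (cF α₁) := by
      have h1' := freshman (p := p) (R := Rring F) s (cF α₀)
      rw [cF_pow, h0] at h1'
      exact h1'
    rw [h1]
    have h2 : (X : (Rring F)[X]) ^ (2 * p ^ s) - C (cF α₁) = f + C (α - cF α₁) := by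
      rw [hf, C_sub]; exact (sub_add_sub_cancel _ _ _).symm
    rw [h2, mul_add, ← C_mul]
    congr 1
    have h3 : α - cF α₁ = cF α₂ * uElem F + cF α₃ * vElem F + cF α₄ * (uElem F * vElem F) := by
      rw [hα]; ring
    rw [h3, uMulRest]
  have hkey : AdjoinRoot.of f (uElem F) *
      (AdjoinRoot.root f ^ 2 - AdjoinRoot.of f (cF α₀)) ^ p ^ s = AdjoinRoot.of f r := by
    have := congrArg (AdjoinRoot.mk (R := Rring F) f) hpoly
    simpa only [map_mul, map_add, map_pow, map_sub, AdjoinRoot.mk_X, AdjoinRoot.mk_C,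
      AdjoinRoot.mk_self, mul_zero, zero_add] using this
  -- the codeword
  set z : Fin n := ⟨0, hnpos⟩ with hz
  set c : Fin n → Rring F := Pi.single z r with hc
  have hcz : c z = r := by rw [hc]; simp
  have hcne : ∀ i : Fin n, i ≠ z → c i = 0 := fun i hi => by rw [hc]; exact Pi.single_eq_of_ne (M := fun _ => Rring F) hi r
  have hc0 : c ≠ 0 := by
    intro h
    apply hr
    rw [← hcz, h, Pi.zero_apply]
  have hvec : vecToQ f c = AdjoinRoot.of f r := by
    rw [vecToQ, ← Finset.sum_subset (Finset.subset_univ {z})]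
    · rw [Finset.sum_singleton, hcz]
      simp [hz]
    · intro i _ hi
      rw [hcne i (by simpa using hi), map_zero, zero_mul]
  have hmem : vecToQ f c ∈ Ideal.span {AdjoinRoot.of f (uElem F) *
      (AdjoinRoot.root f ^ 2 - AdjoinRoot.of f (cF α₀)) ^ ℓ} := by
    rw [hvec, Ideal.mem_span_singleton]
    refine ⟨(AdjoinRoot.root f ^ 2 - AdjoinRoot.of f (cF α₀)) ^ (p ^ s - ℓ), ?_⟩
    rw [← hkey, mul_assoc, ← pow_add, Nat.add_sub_cancel' hℓ]
  -- wtSP c = 2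
  set lst : Fin n := ⟨n - 1, by omega⟩ with hlst
  have hzlst : z ≠ lst := by
    intro h
    have h' : (0 : ℕ) = n - 1 := congrArg Fin.val h
    omega
  have hcycl : cycSucc lst = z := by
    rw [hlst, hz, cycSucc]
    simp only [Fin.mk.injEq]
    have : n - 1 + 1 = n := by omega
    rw [this, Nat.mod_self]
  have hcyc0 : ∀ i : Fin n, cycSucc i = z ↔ i = lst := by
    intro i
    constructor
    · intro h
      rw [cycSucc, hz] at h
      simp only [Fin.mk.injEq] at h
      have hi := i.isLt
      rcases Nat.lt_or_ge ((i : ℕ) + 1) n with h' | h'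
      · rw [Nat.mod_eq_of_lt h'] at h; exact absurd h (by omega)
      · have : (i : ℕ) + 1 = n := by omega
        rw [hlst]; exact Fin.ext (show (i:ℕ) = n - 1 by omega)
    · intro h; rw [h, hcycl]
  have hwt : wtSP c = 2 := by
    have hset : {i : Fin n | (c i, c (cycSucc i)) ≠ (0, 0)} = {z, lst} := by
      ext i
      simp only [Set.mem_setOf_eq, Set.mem_insert_iff, Set.mem_singleton_iff, ne_eq,
        Prod.mk.injEq, not_and_or]
      constructor
      · rintro (h | h)
        · left; by_contra hne; exact h (hcne i hne)
        · right
          rw [← hcyc0 i]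
          by_contra hne; exact h (hcne _ hne)
      · rintro (h | h)
        · left; rw [h, hcz]; exact hr
        · right; rw [h, hcycl, hcz]; exact hr
    rw [wtSP, hset, Set.ncard_pair hzlst]
  -- conclude
  apply le_antisymm
  · exact Nat.sInf_le ⟨c, hc0, hmem, hwt.symm⟩
  · refine le_csInf ⟨2, c, hc0, hmem, hwt.symm⟩ ?_
    rintro w ⟨d, hd0, -, rfl⟩
    -- lower bound: any nonzero vector has wtSP ≥ 2
    obtain ⟨i, hi⟩ : ∃ i, d i ≠ 0 := by
      by_contra h
      push_neg at h
      exact hd0 (funext h)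
    set j : Fin n := ⟨((i : ℕ) + (n - 1)) % n, Nat.mod_lt _ hnpos⟩ with hj
    have hcj : cycSucc j = i := by
      rw [cycSucc, hj]
      apply Fin.ext
      simp only
      rw [Nat.mod_add_mod]
      have : (i : ℕ) + (n - 1) + 1 = (i : ℕ) + n := by omega
      rw [this, Nat.add_mod_right, Nat.mod_eq_of_lt i.isLt]
    have hij : i ≠ j := by
      intro h
      have h2 : cycSucc i = i := by rw [h]; exact h ▸ hcj
      rw [cycSucc] at h2
      have h3 : ((i : ℕ) + 1) % n = i := congrArg Fin.val h2
      have hi' := i.isLt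
      rcases Nat.lt_or_ge ((i : ℕ) + 1) n with h' | h'
      · rw [Nat.mod_eq_of_lt h'] at h3; omega
      · have : (i : ℕ) + 1 = n := by omega
        rw [this, Nat.mod_self] at h3
        omega
    have hsub : ({i, j} : Set (Fin n)) ⊆ {k : Fin n | (d k, d (cycSucc k)) ≠ (0, 0)} := by
      rintro k (rfl | rfl)
      · simp only [Set.mem_setOf_eq, ne_eq, Prod.mk.injEq, not_and_or]
        exact Or.inl hi
      · simp only [Set.mem_setOf_eq, ne_eq, Prod.mk.injEq, not_and_or]
        right; rw [hcj]; exact hi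
    calc 2 = ({i, j} : Set (Fin n)).ncard := (Set.ncard_pair hij).symm
      _ ≤ _ := Set.ncard_le_ncard hsub (Set.toFinite _)
end
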